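/- For every graph G, the block number β(G) equals the block-width bw(G); equivalently, for every k, G has a block-decomposition of adhesion and width both at most k if and only if G has no (k+1)-block. -/

import Mathlib

variable {V : Type*}

/-- `S` separates `u` from `v` in `G`: neither lies in `S` and every walk meets `S`. -/
def SepBy (G : SimpleGraph V) (S : Set V) (u v : V) : Prop :=
  u ∉ S ∧ v ∉ S ∧ ∀ p : G.Walk u v, ∃ w ∈ p.support, w ∈ S

/-- `X` is (≤k)-inseparable: no set of at most `k` vertices separates two of its vertices. -/
def Insep (G : SimpleGraph V) (k : ℕ) (X : Set V) : Prop :=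
  ∀ S : Finset V, S.card ≤ k → ∀ u ∈ X, ∀ v ∈ X, ¬ SepBy G (S : Set V) u v

/-- A `k`-block: a maximal (≤(k-1))-inseparable set of at least `k` vertices. -/
def IsBlockN (G : SimpleGraph V) (k : ℕ) (B : Set V) : Prop :=
  k ≤ B.ncard ∧ Insep G (k - 1) B ∧
    ∀ B' : Set V, B ⊆ B' → Insep G (k - 1) B' → B' = B

/-- `(A,B)` is a separation of `G`. -/
def IsSepn (G : SimpleGraph V) (A B : Set V) : Prop :=
  A ∪ B = Set.univ ∧ ∀ a ∈ A \ B, ∀ b ∈ B \ A, ¬ G.Adj a b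

/-- A separation is proper if neither side contains the other. -/
def ProperSep (A B : Set V) : Prop := ¬ A ⊆ B ∧ ¬ B ⊆ A

/-- `G` is `k`-connected. -/
def KConn (G : SimpleGraph V) [Fintype V] (k : ℕ) : Prop :=
  k < Fintype.card V ∧ ∀ S : Finset V, S.card < k → ∀ u v : V, ¬ SepBy G (S : Set V) u v

/-- A rooted binary branching tree whose branching nodes carry separations and
whose leaves carry vertex sets. -/
inductive BDTree (V : Type u) : Type u
  | leaf (X : Set V) : BDTree V
  | node (A B : Set V) (l r : BDTree V) : BDTree V

/-- `BValid G X t`: `t` is a block-decomposition tree of the part `X` of `G`: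
each branching node is labelled by a separation of `G` separating two vertices of the
current set, and the children carry the intersections with the two sides. -/
def BValid (G : SimpleGraph V) : Set V → BDTree V → Prop
  | X, .leaf Y => Y = X
  | X, .node A B l r =>
      IsSepn G A B ∧ (∃ u ∈ X, ∃ v ∈ X, u ∈ A \ B ∧ v ∈ B \ A) ∧
        BValid G (X ∩ A) l ∧ BValid G (X ∩ B) r

/-- The leaf sets of a block-decomposition tree. -/
def BLeaves : BDTree V → Set (Set V)
  | .leaf Y => {Y}
  | .node _ _ l r => BLeaves l ∪ BLeaves r

/-- The decomposition has adhesion at most `k`. -/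
def BAdhLE (k : ℕ) : BDTree V → Prop
  | .leaf _ => True
  | .node A B l r => (A ∩ B).ncard ≤ k ∧ BAdhLE k l ∧ BAdhLE k r

/-- The decomposition has width at most `k`. -/
def BWidthLE (k : ℕ) : BDTree V → Prop
  | .leaf Y => Y.ncard ≤ k
  | .node _ _ l r => BWidthLE k l ∧ BWidthLE k r

/-!
If `G` has a `(k+1)`-block `B`, then no separation of order at most `k` can split `B`, so
following the sides containing `B` down a decomposition of adhesion `≤ k` lands `B` in a
single leaf, which then has more than `k` vertices. Conversely, if there is no `(k+1)`-block,
every set `X` of more than `k` vertices is split by some `S` with `|S| ≤ k` (otherwise `X`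
would extend to a maximal such set, a block); the component side of this separator gives a
separation of order `≤ k` separating two vertices of `X`, and recursing on the two strictly
smaller parts of `X` builds the decomposition.
-/

section

variable {G : SimpleGraph V}

lemma IsSepn.mem_or_mem {A C : Set V} (h : IsSepn G A C) (x : V) : x ∈ A ∨ x ∈ C :=
  Set.mem_union _ _ _ |>.1 (h.1 ▸ Set.mem_univ x)

lemma IsSepn.exists_mem_support_inter {A C : Set V} (h : IsSepn G A C) {x y : V}
    (p : G.Walk x y) (hx : x ∈ A) (hy : y ∉ A) : ∃ w ∈ p.support, w ∈ A ∩ C := by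
  obtain ⟨d, hd, hdA, hdA'⟩ := p.exists_boundary_dart A hx hy
  have hdC' : d.snd ∈ C := (h.mem_or_mem _).resolve_left hdA'
  refine ⟨d.fst, p.dart_fst_mem_support_of_mem_darts hd, hdA, ?_⟩
  by_contra hdC
  exact h.2 _ ⟨hdA, hdC⟩ _ ⟨hdC', hdA'⟩ d.adj

/-- The side of the separation is the set of vertices reachable from `u` avoiding `S`,
together with `S`. -/
lemma SepBy.exists_isSepn {S : Set V} {u v : V} (h : SepBy G S u v) :
    ∃ A C : Set V, IsSepn G A C ∧ A ∩ C ⊆ S ∧ u ∈ A \ C ∧ v ∈ C \ A := by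
  obtain ⟨huS, hvS, hmeet⟩ := h
  set R : Set V := {w | ∃ p : G.Walk u w, ∀ x ∈ p.support, x ∉ S}
  have huR : u ∈ R := ⟨.nil, by simpa using huS⟩
  have hvR : v ∉ R := by
    rintro ⟨p, hp⟩
    obtain ⟨w, hw, hwS⟩ := hmeet p
    exact hp w hw hwS
  have hR_closed : ∀ a ∈ R, ∀ b, G.Adj a b → b ∉ S → b ∈ R := by
    rintro a ⟨p, hp⟩ b hab hbS
    refine ⟨p.concat hab, fun x hx => ?_⟩
    rw [SimpleGraph.Walk.support_concat, List.mem_append, List.mem_singleton] at hx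
    rcases hx with hx | rfl
    exacts [hp x hx, hbS]
  refine ⟨R ∪ S, Rᶜ, ⟨?_, ?_⟩, ?_, ⟨Or.inl huR, not_not.2 huR⟩, ⟨hvR, ?_⟩⟩
  · exact Set.eq_univ_of_forall fun x => (em (x ∈ R)).imp Or.inl id
  · rintro a ⟨-, haR⟩ b ⟨-, hb⟩ hab
    rw [Set.mem_union, not_or] at hb
    exact hb.1 (hR_closed a (not_not.1 haR) b hab hb.2)
  · rintro x ⟨hxR | hxS, hxR'⟩
    exacts [absurd hxR hxR', hxS]
  · rintro (hv | hv)
    exacts [hvR hv, hvS hv]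

variable [Finite V] {k : ℕ}

lemma Insep.subset_or_subset {B A C : Set V} (hB : Insep G k B) (hAC : IsSepn G A C)
    (hadh : (A ∩ C).ncard ≤ k) : B ⊆ A ∨ B ⊆ C := by
  by_contra! hcon
  obtain ⟨a, haB, haC⟩ := Set.not_subset.mp hcon.2
  obtain ⟨b, hbB, hbA⟩ := Set.not_subset.mp hcon.1
  have haA : a ∈ A := (hAC.mem_or_mem a).resolve_right haC
  have hfin : (A ∩ C).Finite := Set.toFinite _
  refine hB hfin.toFinset (by rwa [← Set.ncard_eq_toFinset_card _ hfin]) a haB b hbB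
    ⟨?_, ?_, fun p => ?_⟩
  · simpa using fun _ => haC
  · simpa using fun h _ => hbA h
  · simpa using hAC.exists_mem_support_inter p haA hbA

lemma BValid.ncard_le_of_insep {B X : Set V} {t : BDTree V} (ht : BValid G X t)
    (hadh : BAdhLE k t) (hwidth : BWidthLE k t) (hB : Insep G k B) (hBX : B ⊆ X) :
    B.ncard ≤ k := by
  induction t generalizing X with
  | leaf Y =>
    subst ht
    exact (Set.ncard_le_ncard hBX).trans hwidth
  | node A C l r ihl ihr =>
    obtain ⟨hAC, -, hl, hr⟩ := ht
    rcases hB.subset_or_subset hAC hadh.1 with hBA | hBC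
    · exact ihl hl hadh.2.1 hwidth.1 (Set.subset_inter hBX hBA)
    · exact ihr hr hadh.2.2 hwidth.2 (Set.subset_inter hBX hBC)

lemma exists_isBlockN_of_insep {X : Set V} (hX : k < X.ncard) (hins : Insep G k X) :
    ∃ B, IsBlockN G (k + 1) B := by
  obtain ⟨B, ⟨hXB, hB⟩, hmax⟩ :=
    (Set.toFinite {B : Set V | X ⊆ B ∧ Insep G k B}).exists_maximalFor Set.ncard _
      ⟨X, le_rfl, hins⟩
  refine ⟨B, hX.trans_le (Set.ncard_le_ncard hXB), by simpa using hB, fun B' hBB' hB' => ?_⟩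
  have hB'max := hmax ⟨hXB.trans hBB', by simpa using hB'⟩ (Set.ncard_le_ncard hBB')
  exact (Set.eq_of_subset_of_ncard_le hBB' hB'max).symm

lemma exists_bValid_of_forall_not_insep (h : ∀ X : Set V, k < X.ncard → ¬ Insep G k X)
    (X : Set V) : ∃ t : BDTree V, BValid G X t ∧ BAdhLE k t ∧ BWidthLE k t := by
  induction hn : X.ncard using Nat.strong_induction_on generalizing X with
  | _ n ih =>
  by_cases hXk : X.ncard ≤ k
  · exact ⟨.leaf X, rfl, trivial, hXk⟩
  obtain ⟨S, hS, u, hu, v, hv, huv⟩ :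
      ∃ S : Finset V, S.card ≤ k ∧ ∃ u ∈ X, ∃ v ∈ X, SepBy G S u v := by
    simpa [Insep] using h X (not_le.1 hXk)
  obtain ⟨A, C, hAC, hAC_S, huA, hvC⟩ := huv.exists_isSepn
  have hpart : ∀ Y : Set V, ∀ x ∈ X, x ∉ Y →
      ∃ t : BDTree V, BValid G (X ∩ Y) t ∧ BAdhLE k t ∧ BWidthLE k t := fun Y x hx hxY =>
    ih _ (hn ▸ Set.ncard_lt_ncard (Set.inter_ssubset_left_iff.2 fun hXY => hxY (hXY hx)))
      _ rfl
  obtain ⟨l, hl, hladh, hlw⟩ := hpart A v hv hvC.2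
  obtain ⟨r, hr, hradh, hrw⟩ := hpart C u hu huA.2
  have hadh : (A ∩ C).ncard ≤ k := (Set.ncard_le_ncard hAC_S).trans (by simpa using hS)
  exact ⟨.node A C l r, ⟨hAC, ⟨u, hu, v, hv, huA, hvC⟩, hl, hr⟩, ⟨hadh, hladh, hradh⟩,
    hlw, hrw⟩

end

theorem stmt16 [Fintype V] (G : SimpleGraph V) (k : ℕ) :
    (∃ t : BDTree V, BValid G Set.univ t ∧ BAdhLE k t ∧ BWidthLE k t)
      ↔ ¬ ∃ B : Set V, IsBlockN G (k + 1) B := by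
  constructor
  · rintro ⟨t, ht, hadh, hwidth⟩ ⟨B, hBcard, hB, -⟩
    have := ht.ncard_le_of_insep hadh hwidth (by simpa using hB) (Set.subset_univ B)
    omega
  · intro hnb
    exact exists_bValid_of_forall_not_insep
      (fun X hX hins => hnb (exists_isBlockN_of_insep hX hins)) Set.univ
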